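/- arXiv:2004.04772 — 2 statements merged into one kernel-verified Lean document; each statement's English description precedes it below -/
import Mathlib

section
/- Let w : Fin n → ℝ be a frequency vector with w_1 ≥ w_2 ≥ ... ≥ w_n > 0 satisfying w_i/w_1 ≤ c·i^{−α} for all i (subZipf[α,c,n]) with c > 0 and α ≥ 1/2. Then for every p ≥ 2, the overhead of emulating ℓ_p sampling by ℓ_2 sampling satisfies max_{1≤i≤n} [(w_i^p / Σ_j w_j^p) / (w_i^2 / Σ_j w_j^2)] ≤ (1 + ln n) · c². -/
/-!
Writing `P = ∑ w^p`, `Q = ∑ w^2` and `w₁ = max w`, the overhead at `i` is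
`w_i^(p-2) · Q / P ≤ w₁^(p-2) · Q / w₁^p = Q / w₁²`, so it is bounded by the second moment of
the normalized vector `w / w₁`. Under the subZipf bound with `α ≥ 1/2` each term `(w_i / w₁)²` is at
most `c² / i`, and the harmonic estimate `H_n ≤ 1 + ln n` finishes the proof.
-/

open Finset

noncomputable def ppsProb {ι : Type*} [Fintype ι] (p : ℝ) (w : ι → ℝ) (i : ι) : ℝ :=
  w i ^ p / ∑ j, w j ^ p

theorem ppsProb_div_ppsProb_le {ι : Type*} [Fintype ι] {w : ι → ℝ} (hw : ∀ i, 0 < w i)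
    {m : ι} (hm : ∀ i, w i ≤ w m) {p q : ℝ} (hqp : q ≤ p) (i : ι) :
    ppsProb p w i / ppsProb q w i ≤ ∑ j, (w j / w m) ^ q := by
  have hwm := hw m
  have hSp : 0 < ∑ j, w j ^ p :=
    sum_pos (fun j _ => Real.rpow_pos_of_pos (hw j) p) ⟨m, mem_univ _⟩
  have hSq : 0 < ∑ j, w j ^ q :=
    sum_pos (fun j _ => Real.rpow_pos_of_pos (hw j) q) ⟨m, mem_univ _⟩
  have h_max_le_sum : w m ^ p ≤ ∑ j, w j ^ p :=
    single_le_sum (fun j _ => (Real.rpow_pos_of_pos (hw j) p).le) (mem_univ m)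
  have h_pow_sub_le : w i ^ (p - q) ≤ w m ^ (p - q) :=
    Real.rpow_le_rpow (hw i).le (hm i) (sub_nonneg.mpr hqp)
  calc ppsProb p w i / ppsProb q w i
      = w i ^ (p - q) * ((∑ j, w j ^ q) / ∑ j, w j ^ p) := by
        rw [ppsProb, ppsProb, Real.rpow_sub (hw i)]
        field_simp
    _ ≤ w m ^ (p - q) * ((∑ j, w j ^ q) / w m ^ p) := by
        gcongr
    _ = (∑ j, w j ^ q) / w m ^ q := by
        rw [Real.rpow_sub hwm]
        field_simp
    _ = ∑ j, (w j / w m) ^ q := by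
        rw [sum_div]
        exact sum_congr rfl fun j _ => (Real.div_rpow (hw j).le hwm.le q).symm

theorem sq_rpow_neg_le_inv {x α : ℝ} (hx : 1 ≤ x) (hα : 1 / 2 ≤ α) :
    (x ^ (-α)) ^ 2 ≤ x⁻¹ := by
  rw [← Real.rpow_natCast, ← Real.rpow_mul (by linarith), ← Real.rpow_neg_one]
  exact Real.rpow_le_rpow_of_exponent_le hx (by push_cast; linarith)

theorem sum_inv_succ_le_one_add_log (n : ℕ) :
    ∑ j : Fin n, ((j : ℝ) + 1)⁻¹ ≤ 1 + Real.log n := by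
  have h_harmonic : ∑ j : Fin n, ((j : ℝ) + 1)⁻¹ = (harmonic n : ℝ) := by
    rw [harmonic, Fin.sum_univ_eq_sum_range (fun j : ℕ => ((j : ℝ) + 1)⁻¹) n]
    push_cast
    exact sum_congr rfl fun j _ => by rw [add_comm]
  exact h_harmonic ▸ harmonic_le_one_add_log n

theorem sum_sq_le_of_subZipf {n : ℕ} {v : Fin n → ℝ} (hv : ∀ i, 0 ≤ v i) {c α : ℝ}
    (hα : 1 / 2 ≤ α) (hsub : ∀ i : Fin n, v i ≤ c * ((i : ℝ) + 1) ^ (-α)) :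
    ∑ i, v i ^ 2 ≤ (1 + Real.log n) * c ^ 2 := by
  have h_term : ∀ i : Fin n, v i ^ 2 ≤ c ^ 2 * ((i : ℝ) + 1)⁻¹ := fun i =>
    calc v i ^ 2 ≤ (c * ((i : ℝ) + 1) ^ (-α)) ^ 2 := pow_le_pow_left₀ (hv i) (hsub i) 2
      _ = c ^ 2 * (((i : ℝ) + 1) ^ (-α)) ^ 2 := mul_pow _ _ _
      _ ≤ c ^ 2 * ((i : ℝ) + 1)⁻¹ := by
        gcongr
        exact sq_rpow_neg_le_inv (by simp) hα
  calc ∑ i, v i ^ 2 ≤ ∑ i : Fin n, c ^ 2 * ((i : ℝ) + 1)⁻¹ := sum_le_sum fun i _ => h_term i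
    _ = c ^ 2 * ∑ i : Fin n, ((i : ℝ) + 1)⁻¹ := (mul_sum _ _ _).symm
    _ ≤ c ^ 2 * (1 + Real.log n) := by gcongr; exact sum_inv_succ_le_one_add_log n
    _ = (1 + Real.log n) * c ^ 2 := mul_comm _ _

theorem stmt_9_general {n : ℕ} (hn : 0 < n) (w : Fin n → ℝ)
    (hpos : ∀ i, 0 < w i) (hmono : ∀ i j : Fin n, i ≤ j → w j ≤ w i)
    (c α : ℝ) (hα : 1 / 2 ≤ α)
    (hsub : ∀ i : Fin n, w i / w ⟨0, hn⟩ ≤ c * ((i : ℝ) + 1) ^ (-α)) :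
    ∀ p : ℝ, 2 ≤ p →
      (univ.sup' ⟨⟨0, hn⟩, mem_univ _⟩ fun i : Fin n =>
          (w i ^ p / ∑ j, w j ^ p) / (w i ^ (2 : ℝ) / ∑ j, w j ^ (2 : ℝ)))
        ≤ (1 + Real.log n) * c ^ 2 := by
  intro p hp
  have h_first_max : ∀ i, w i ≤ w ⟨0, hn⟩ := fun i => hmono _ i (Nat.zero_le _)
  have h_moment : ∑ j, (w j / w ⟨0, hn⟩) ^ (2 : ℝ) ≤ (1 + Real.log n) * c ^ 2 := by
    simp only [Real.rpow_two]
    exact sum_sq_le_of_subZipf (fun j => div_nonneg (hpos j).le (hpos _).le) hα hsub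
  exact sup'_le _ _ fun i _ =>
    (ppsProb_div_ppsProb_le hpos h_first_max hp i).trans h_moment

/-- for subZipf[α,c,n] frequencies with α ≥ 1/2, the overhead of
emulating ℓ_p sampling (p ≥ 2) by ℓ_2 sampling is at most `(1 + ln n) · c²`. -/
theorem stmt_9 {n : ℕ} (hn : 0 < n) (w : Fin n → ℝ)
    (hpos : ∀ i, 0 < w i) (hmono : ∀ i j : Fin n, i ≤ j → w j ≤ w i)
    (c α : ℝ) (hc : 0 < c) (hα : 1 / 2 ≤ α)
    (hsub : ∀ i : Fin n, w i / w ⟨0, hn⟩ ≤ c * ((i : ℝ) + 1) ^ (-α)) :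
    ∀ p : ℝ, 2 ≤ p →
      (univ.sup' ⟨⟨0, hn⟩, mem_univ _⟩ fun i : Fin n =>
          (w i ^ p / ∑ j, w j ^ p) / (w i ^ (2 : ℝ) / ∑ j, w j ^ (2 : ℝ)))
        ≤ (1 + Real.log n) * c ^ 2 :=
  stmt_9_general hn w hpos hmono c α hα hsub
end

section
/- Let w : Fin n → ℝ be strictly decreasing with w_1 > w_2 > ... > w_n > 0, and fix i ∈ {1,...,n}. Then the threshold function f(t) = 1 if t ≥ w_i and f(t) = 0 otherwise is monotone nondecreasing, and it satisfies f(w_i) / (Σ_{j=1}^n f(w_j)) = 1/i. Consequently, for every probability vector q with q_j > 0 for all j, the universal emulation overhead sup_{f monotone nondecreasing, Σ_j f(w_j) > 0} max_j f(w_j)/((Σ_k f(w_k))·q_j) equals max_j 1/(j·q_j). -/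
/-!
For monotone `f` and decreasing `w`, the key of (0-based) rank `j` has `f (w j) ≤ f (w k)` for
all `k ≤ j`, so `(j + 1) * f (w j) ≤ ∑ k, f (w k)`, i.e. its pps probability is at most
`1 / (j + 1)`. The threshold function at `w i` attains this at `j = i`, so choosing `i` to
maximize `1 / ((i + 1) * q i)` attains the bound `max_j 1 / ((j + 1) * q j)`.
-/

open Finset

theorem monotone_ite_le_one_zero {α β : Type*} [Preorder α] [DecidableLE α] [Zero β] [One β]
    [Preorder β] [ZeroLEOneClass β] (a : α) :
    Monotone fun t : α => if a ≤ t then (1 : β) else 0 := by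
  intro s t hst
  dsimp only
  split_ifs with hs ht
  · exact le_rfl
  · exact absurd (hs.trans hst) ht
  · exact zero_le_one
  · exact le_rfl

theorem StrictAnti.card_filter_apply_le {α : Type*} [LinearOrder α] {n : ℕ} {w : Fin n → α}
    (hw : StrictAnti w) (i : Fin n) : #{j | w i ≤ w j} = i + 1 := by
  simp_rw [hw.le_iff_ge]
  rw [filter_ge_eq_Iic, Fin.card_Iic]

theorem Fin.succ_nsmul_le_sum_of_antitone {M : Type*} [AddCommMonoid M] [PartialOrder M]
    [IsOrderedAddMonoid M] {n : ℕ} {g : Fin n → M} (hg : Antitone g) (hg0 : ∀ k, 0 ≤ g k)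
    (j : Fin n) : (j + 1 : ℕ) • g j ≤ ∑ k, g k :=
  calc (j + 1 : ℕ) • g j = ∑ _k ∈ Iic j, g j := by rw [Finset.sum_const, Fin.card_Iic]
    _ ≤ ∑ k ∈ Iic j, g k := sum_le_sum fun k hk => hg (mem_Iic.1 hk)
    _ ≤ ∑ k, g k := sum_le_univ_sum_of_nonneg hg0

theorem div_sum_mul_le_of_antitone {n : ℕ} {g : Fin n → ℝ} (hg : Antitone g)
    (hg0 : ∀ k, 0 ≤ g k) {q : ℝ} (hq : 0 ≤ q) (j : Fin n) :
    g j / ((∑ k, g k) * q) ≤ 1 / ((j + 1) * q) := by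
  rw [div_mul_eq_div_div, div_mul_eq_div_div]
  refine div_le_div_of_nonneg_right ?_ hq
  have hsucc := Fin.succ_nsmul_le_sum_of_antitone hg hg0 j
  rw [nsmul_eq_mul, Nat.cast_succ] at hsucc
  rcases (sum_nonneg fun k _ => hg0 k : 0 ≤ ∑ k, g k).eq_or_lt with hS | hS
  · rw [← hS, div_zero]
    positivity
  · rw [div_le_div_iff₀ hS (by positivity)]
    linarith

theorem stmt_13_general {n : ℕ} (hn : 0 < n) (w : Fin n → ℝ)
    (hstrict : ∀ i j : Fin n, i < j → w j < w i)
    (q : Fin n → ℝ) (hq : ∀ j, 0 < q j) :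
    (∀ i : Fin n,
      Monotone (fun t : ℝ => if w i ≤ t then (1 : ℝ) else 0) ∧
      (if w i ≤ w i then (1 : ℝ) else 0) /
          (∑ j, if w i ≤ w j then (1 : ℝ) else 0) = 1 / ((i : ℝ) + 1)) ∧
    sSup {M : ℝ | ∃ f : ℝ → ℝ, Monotone f ∧ (∀ t, 0 ≤ f t) ∧
          0 < ∑ j, f (w j) ∧
          M = univ.sup' ⟨⟨0, hn⟩, mem_univ _⟩ fun j : Fin n =>
                f (w j) / ((∑ k, f (w k)) * q j)}
      = univ.sup' ⟨⟨0, hn⟩, mem_univ _⟩ fun j : Fin n =>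
          1 / (((j : ℝ) + 1) * q j) := by
  have hw : StrictAnti w := hstrict
  have hcount (i : Fin n) : (∑ j, if w i ≤ w j then (1 : ℝ) else 0) = i + 1 := by
    rw [sum_boole, hw.card_filter_apply_le]
    push_cast
    rfl
  refine ⟨fun i => ⟨monotone_ite_le_one_zero (w i), by rw [if_pos le_rfl, hcount]⟩, ?_⟩
  set R := univ.sup' ⟨⟨0, hn⟩, mem_univ _⟩ fun j : Fin n => 1 / (((j : ℝ) + 1) * q j)
  have hbound (f : ℝ → ℝ) (hf : Monotone f) (hf0 : ∀ t, 0 ≤ f t) :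
      univ.sup' ⟨⟨0, hn⟩, mem_univ _⟩ (fun j : Fin n => f (w j) / ((∑ k, f (w k)) * q j))
        ≤ R :=
    sup'_le _ _ fun j _ =>
      (div_sum_mul_le_of_antitone (hf.comp_antitone hw.antitone) (fun _ => hf0 _) (hq j).le j).trans
        (le_sup' (fun j : Fin n => 1 / (((j : ℝ) + 1) * q j)) (mem_univ j))
  obtain ⟨i, -, hi⟩ : ∃ i : Fin n, i ∈ univ ∧ R = 1 / (((i : ℝ) + 1) * q i) :=
    exists_mem_eq_sup' _ _
  have hmono := monotone_ite_le_one_zero (β := ℝ) (w i)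
  have hnonneg (t : ℝ) : 0 ≤ if w i ≤ t then (1 : ℝ) else 0 := ite_nonneg zero_le_one le_rfl
  refine IsGreatest.csSup_eq ⟨⟨_, hmono, hnonneg, by rw [hcount]; positivity,
    le_antisymm ?_ (hbound _ hmono hnonneg)⟩,
    fun M ⟨f, hf, hf0, _, hM⟩ => hM ▸ hbound f hf hf0⟩
  rw [hi]
  exact le_sup'_of_le _ (mem_univ i) (by rw [if_pos le_rfl, hcount])

/-- with strictly decreasing frequencies, the threshold function at
`w i` is monotone nondecreasing and has pps probability exactly `1/i` for the key of
rank `i`; consequently the universal emulation overhead of any positive `q` is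
exactly `max_j 1/(j·q_j)`. -/
theorem stmt_13 {n : ℕ} (hn : 0 < n) (w : Fin n → ℝ)
    (hpos : ∀ i, 0 < w i) (hstrict : ∀ i j : Fin n, i < j → w j < w i)
    (q : Fin n → ℝ) (hq : ∀ j, 0 < q j) :
    (∀ i : Fin n,
      Monotone (fun t : ℝ => if w i ≤ t then (1 : ℝ) else 0) ∧
      (if w i ≤ w i then (1 : ℝ) else 0) /
          (∑ j, if w i ≤ w j then (1 : ℝ) else 0) = 1 / ((i : ℝ) + 1)) ∧
    sSup {M : ℝ | ∃ f : ℝ → ℝ, Monotone f ∧ (∀ t, 0 ≤ f t) ∧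
          0 < ∑ j, f (w j) ∧
          M = univ.sup' ⟨⟨0, hn⟩, mem_univ _⟩ fun j : Fin n =>
                f (w j) / ((∑ k, f (w k)) * q j)}
      = univ.sup' ⟨⟨0, hn⟩, mem_univ _⟩ fun j : Fin n =>
          1 / (((j : ℝ) + 1) * q j) :=
  stmt_13_general hn w hstrict q hq
end
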